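/- arXiv:1909.13145 — 2 statements merged into one kernel-verified Lean document; each statement's English description precedes it below -/
import Mathlib

section
/- Let m be a positive integer and J, J′, K, K′ ⊆ {0,1,…,m−1} with |J| = |J′| = |K| = |K′|, and suppose H_{J,K,m} is a Hadamard submatrix of the Fourier matrix F_m. If P_m(J′) = P_m(J) and P_m(K′) = P_m(K), then H_{J′,K′,m} is also a Hadamard submatrix of F_m. Alternatively, if P_m(J′) = P_m(K) and P_m(K′) = P_m(J), then H_{J′,K′,m} is also a Hadamard submatrix of F_m. -/
open Finset

/-- The difference set `D(X) = {x₁ - x₂ : x₁, x₂ ∈ X}` of a finite set of naturals. -/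
def diffSet (X : Finset ℕ) : Finset ℤ :=
  (X ×ˢ X).image fun q => (q.1 : ℤ) - (q.2 : ℤ)

/-- The `m`-th primitive set `P_m(X) = {m / gcd(m,d) : d ∈ D(X)}`. -/
def primSet (m : ℕ) (X : Finset ℕ) : Finset ℕ :=
  (diffSet X).image fun d => m / Nat.gcd m d.natAbs

/-- `H_{J,K,m}` is a Hadamard submatrix of the Fourier matrix `F_m`:
for all distinct `j₁ j₂ ∈ J`, `∑_{k ∈ K} e^{2πi(j₁-j₂)k/m} = 0`. -/
def IsHadamardSub (m : ℕ) (J K : Finset ℕ) : Prop :=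
  ∀ j₁ ∈ J, ∀ j₂ ∈ J, j₁ ≠ j₂ →
    ∑ k ∈ K, Complex.exp (2 * Real.pi * Complex.I * ((j₁ : ℂ) - (j₂ : ℂ)) * (k : ℂ) / (m : ℂ)) = 0

/-- `ν_p^max` of a finite set of naturals. -/
noncomputable def nuMaxN (p : ℕ) (S : Finset ℕ) : ℕ := S.sup fun n => padicValNat p n

/-- `ν_p^min` of a finite set of naturals (0 for the empty set). -/
noncomputable def nuMinN (p : ℕ) (S : Finset ℕ) : ℕ :=
  if h : S.Nonempty then S.inf' h fun n => padicValNat p n else 0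

/-- `ν_p^max` of a finite set of integers. -/
noncomputable def nuMaxI (p : ℕ) (S : Finset ℤ) : ℕ := S.sup fun d => padicValInt p d

/-- `ν_p^min` of a finite set of integers (0 for the empty set). -/
noncomputable def nuMinI (p : ℕ) (S : Finset ℤ) : ℕ :=
  if h : S.Nonempty then S.inf' h fun d => padicValInt p d else 0

/-- `C_m(X) = ∏_{s ∈ P_m(X) \ {1}} Φ_s(1)`. -/
noncomputable def Cm (m : ℕ) (X : Finset ℕ) : ℤ :=
  ∏ s ∈ (primSet m X).erase 1, (Polynomial.cyclotomic s ℤ).eval 1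

/-!
For `d = j₁ - j₂`, the entry sum `∑_{k ∈ K} e^{2πidk/m}` is `∑_{k ∈ K} ζ^k` for a primitive
`s`-th root of unity `ζ`, where `s = m / gcd(m, d)`. It vanishes iff the cyclotomic polynomial
`Φ_s` divides `∑_{k ∈ K} X^k`, so it vanishes for one primitive `s`-th root iff for all of them.
Since `J ⊆ [0, m)`, `s = 1` exactly when `j₁ = j₂`; hence `H_{J,K,m}` is Hadamard iff
`∑_{k ∈ K} e^{2πik/s} = 0` for every `s ∈ P_m(J) \ {1}`, a condition on `P_m(J)` and `K` alone.
Rows and columns may also be swapped: `H_{K,J,m} = H_{J,K,m}ᵀ`, and for a square matrix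
`H H* = n I` implies `H* H = n I`, i.e. `Hᵀ (Hᵀ)* = n I`. Both claims follow by alternately
replacing the row set using equal primitive sets and transposing.
-/

open Complex Polynomial
open scoped Matrix

theorem IsPrimitiveRoot.aeval_eq_zero_iff {F : Type*} [Field F] [CharZero F] {s : ℕ} (hs : 0 < s)
    {ζ ξ : F} (hζ : IsPrimitiveRoot ζ s) (hξ : IsPrimitiveRoot ξ s) (p : ℚ[X]) :
    aeval ζ p = 0 ↔ aeval ξ p = 0 := by
  rw [← minpoly.dvd_iff, ← minpoly.dvd_iff, ← cyclotomic_eq_minpoly_rat hζ hs,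
    ← cyclotomic_eq_minpoly_rat hξ hs]

theorem IsPrimitiveRoot.sum_pow_eq_zero_iff {F : Type*} [Field F] [CharZero F] {s : ℕ}
    (hs : 0 < s) {ζ ξ : F} (hζ : IsPrimitiveRoot ζ s) (hξ : IsPrimitiveRoot ξ s) (K : Finset ℕ) :
    ∑ k ∈ K, ζ ^ k = 0 ↔ ∑ k ∈ K, ξ ^ k = 0 := by
  simpa using hζ.aeval_eq_zero_iff hs hξ (∑ k ∈ K, X ^ k)

theorem isPrimitiveRoot_exp_int_div (d : ℤ) {m : ℕ} (hm : m ≠ 0) :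
    IsPrimitiveRoot (exp (2 * Real.pi * I * d / m)) (m / m.gcd d.natAbs) := by
  have h := isPrimitiveRoot_exp_rat (mkRat d m)
  rwa [Rat.den_mkRat, if_neg hm, Rat.mkRat_eq_div, Rat.cast_div, Rat.cast_intCast,
    Rat.cast_natCast, ← mul_div_assoc] at h

theorem sum_exp_int_div_pow_eq_zero_iff (d : ℤ) {m : ℕ} (hm : 0 < m) (K : Finset ℕ) :
    ∑ k ∈ K, exp (2 * Real.pi * I * d / m) ^ k = 0 ↔
      ∑ k ∈ K, exp (2 * Real.pi * I / (m / m.gcd d.natAbs : ℕ)) ^ k = 0 := by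
  have hs : 0 < m / m.gcd d.natAbs :=
    Nat.div_pos (Nat.gcd_le_left _ hm) (Nat.gcd_pos_of_pos_left _ hm)
  exact (isPrimitiveRoot_exp_int_div d hm.ne').sum_pow_eq_zero_iff hs
    (isPrimitiveRoot_exp _ hs.ne') K

theorem div_gcd_natAbs_eq_one_iff {m : ℕ} (hm : 0 < m) (d : ℤ) :
    m / m.gcd d.natAbs = 1 ↔ (m : ℤ) ∣ d := by
  rw [Nat.div_eq_iff_eq_mul_left (Nat.gcd_pos_of_pos_left _ hm) (Nat.gcd_dvd_left _ _), one_mul,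
    eq_comm, Nat.gcd_eq_left_iff_dvd, Int.natCast_dvd]

theorem natCast_dvd_sub_iff_eq {m j₁ j₂ : ℕ} (h₁ : j₁ < m) (h₂ : j₂ < m) :
    (m : ℤ) ∣ (j₁ : ℤ) - j₂ ↔ j₁ = j₂ := by
  rw [← Nat.modEq_iff_dvd, Nat.ModEq, Nat.mod_eq_of_lt h₁, Nat.mod_eq_of_lt h₂, eq_comm]

theorem mem_primSet_erase_one_iff {m : ℕ} (hm : 0 < m) {J : Finset ℕ} (hJ : J ⊆ range m)
    {s : ℕ} :
    s ∈ (primSet m J).erase 1 ↔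
      ∃ j₁ ∈ J, ∃ j₂ ∈ J, j₁ ≠ j₂ ∧ m / m.gcd ((j₁ : ℤ) - j₂).natAbs = s := by
  simp only [mem_erase, primSet, diffSet, mem_image, mem_product, Prod.exists]
  constructor
  · rintro ⟨hs, _, ⟨j₁, j₂, ⟨hj₁, hj₂⟩, rfl⟩, rfl⟩
    refine ⟨j₁, hj₁, j₂, hj₂, ?_, rfl⟩
    rintro rfl
    simp [Nat.div_self hm] at hs
  · rintro ⟨j₁, hj₁, j₂, hj₂, hne, rfl⟩
    refine ⟨?_, _, ⟨j₁, j₂, ⟨hj₁, hj₂⟩, rfl⟩, rfl⟩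
    rwa [Ne, div_gcd_natAbs_eq_one_iff hm,
      natCast_dvd_sub_iff_eq (mem_range.mp (hJ hj₁)) (mem_range.mp (hJ hj₂))]

theorem exp_mul_natCast_div_eq_pow (j₁ j₂ k m : ℕ) :
    exp (2 * Real.pi * I * ((j₁ : ℂ) - j₂) * k / m) =
      exp (2 * Real.pi * I * (((j₁ : ℤ) - j₂ : ℤ) : ℂ) / m) ^ k := by
  rw [← exp_nat_mul]
  congr 1
  push_cast
  ring

theorem isHadamardSub_iff {m : ℕ} (hm : 0 < m) {J : Finset ℕ} (hJ : J ⊆ range m)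
    (K : Finset ℕ) :
    IsHadamardSub m J K ↔
      ∀ s ∈ (primSet m J).erase 1, ∑ k ∈ K, exp (2 * Real.pi * I / s) ^ k = 0 := by
  simp only [mem_primSet_erase_one_iff hm hJ, IsHadamardSub, exp_mul_natCast_div_eq_pow,
    sum_exp_int_div_pow_eq_zero_iff _ hm]
  exact ⟨fun h s ⟨j₁, hj₁, j₂, hj₂, hne, hs⟩ => hs ▸ h j₁ hj₁ j₂ hj₂ hne,
    fun h j₁ hj₁ j₂ hj₂ hne => h _ ⟨j₁, hj₁, j₂, hj₂, hne, rfl⟩⟩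

theorem IsHadamardSub.of_primSet_eq {m : ℕ} (hm : 0 < m) {J J' K : Finset ℕ}
    (hJ : J ⊆ range m) (hJ' : J' ⊆ range m) (hP : primSet m J' = primSet m J)
    (h : IsHadamardSub m J K) : IsHadamardSub m J' K := by
  rwa [isHadamardSub_iff hm hJ' K, hP, ← isHadamardSub_iff hm hJ K]

theorem Matrix.conjTranspose_mul_self_eq_smul_one {m n R : Type*} [Fintype m] [Fintype n]
    [DecidableEq m] [DecidableEq n] [Field R] [Star R] (hmn : Fintype.card m = Fintype.card n)
    {M : Matrix m n R} {c : R} (hc : c ≠ 0) (h : M * Mᴴ = c • 1) : Mᴴ * M = c • 1 := by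
  have hinv : M * (c⁻¹ • Mᴴ) = 1 := by
    rw [Matrix.mul_smul, h, smul_smul, inv_mul_cancel₀ hc, one_smul]
  rw [Matrix.mul_eq_one_comm_of_card_eq _ _ _ hmn, Matrix.smul_mul] at hinv
  rw [← hinv, smul_smul, mul_inv_cancel₀ hc, one_smul]

noncomputable def fourierSub (m : ℕ) (J K : Finset ℕ) : Matrix J K ℂ :=
  fun j k => exp (2 * Real.pi * I * j * k / m)

theorem fourierSub_transpose (m : ℕ) (J K : Finset ℕ) :
    (fourierSub m J K)ᵀ = fourierSub m K J := by
  ext k j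
  simp only [Matrix.transpose_apply, fourierSub, mul_right_comm _ (j : ℂ)]

theorem fourierSub_mul_conjTranspose_apply (m : ℕ) (J K : Finset ℕ) (j₁ j₂ : J) :
    (fourierSub m J K * (fourierSub m J K)ᴴ) j₁ j₂ =
      ∑ k ∈ K, exp (2 * Real.pi * I * ((j₁ : ℂ) - j₂) * k / m) := by
  rw [Matrix.mul_apply, ← Finset.sum_coe_sort K]
  refine Finset.sum_congr rfl fun k _ => ?_
  rw [Matrix.conjTranspose_apply, fourierSub, fourierSub, star_def, ← exp_conj, ← exp_add]
  congr 1
  simp [conj_ofReal, map_ofNat]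
  ring

theorem isHadamardSub_iff_mul_conjTranspose (m : ℕ) (J K : Finset ℕ) :
    IsHadamardSub m J K ↔ fourierSub m J K * (fourierSub m J K)ᴴ = (K.card : ℂ) • 1 := by
  rw [← Matrix.ext_iff]
  constructor
  · intro h j₁ j₂
    rw [fourierSub_mul_conjTranspose_apply]
    rcases eq_or_ne j₁ j₂ with rfl | hne
    · simp
    · rw [h _ j₁.2 _ j₂.2 (Subtype.coe_ne_coe.mpr hne)]
      simp [hne]
  · intro h j₁ hj₁ j₂ hj₂ hne
    have := h ⟨j₁, hj₁⟩ ⟨j₂, hj₂⟩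
    rw [fourierSub_mul_conjTranspose_apply] at this
    simpa [hne] using this

theorem IsHadamardSub.symm {m : ℕ} {J K : Finset ℕ} (hJK : J.card = K.card)
    (h : IsHadamardSub m J K) : IsHadamardSub m K J := by
  rcases K.eq_empty_or_nonempty with rfl | hK
  · simp [IsHadamardSub]
  rw [isHadamardSub_iff_mul_conjTranspose] at h ⊢
  have hK₀ : (K.card : ℂ) ≠ 0 := Nat.cast_ne_zero.mpr hK.card_pos.ne'
  have := Matrix.conjTranspose_mul_self_eq_smul_one (by simpa using hJK) hK₀ h
  rw [← fourierSub_transpose, Matrix.conjTranspose_transpose_eq_transpose_conjTranspose,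
    ← Matrix.transpose_mul, this, Matrix.transpose_smul, Matrix.transpose_one, hJK]

theorem hadamard_of_primSets_eq_general (m : ℕ) (hm : 0 < m) (J J' K K' : Finset ℕ)
    (hJ : J ⊆ Finset.range m) (hJ' : J' ⊆ Finset.range m)
    (hK : K ⊆ Finset.range m) (hK' : K' ⊆ Finset.range m)
    (h2 : K.card = J.card) (h3 : K'.card = J.card)
    (hH : IsHadamardSub m J K) :
    ((primSet m J' = primSet m J ∧ primSet m K' = primSet m K) → IsHadamardSub m J' K') ∧
    ((primSet m J' = primSet m K ∧ primSet m K' = primSet m J) → IsHadamardSub m J' K') := by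
  refine ⟨fun ⟨hJJ, hKK⟩ => ?_, fun ⟨hJK, hKJ⟩ => ?_⟩
  · have hK'J : IsHadamardSub m K' J := (hH.symm h2.symm).of_primSet_eq hm hK hK' hKK
    exact (hK'J.symm h3).of_primSet_eq hm hJ hJ' hJJ
  · have hK'K : IsHadamardSub m K' K := hH.of_primSet_eq hm hJ hK' hKJ
    exact (hK'K.symm (h3.trans h2.symm)).of_primSet_eq hm hK hJ' hJK

theorem hadamard_of_primSets_eq (m : ℕ) (hm : 0 < m) (J J' K K' : Finset ℕ)
    (hJ : J ⊆ Finset.range m) (hJ' : J' ⊆ Finset.range m)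
    (hK : K ⊆ Finset.range m) (hK' : K' ⊆ Finset.range m)
    (h1 : J'.card = J.card) (h2 : K.card = J.card) (h3 : K'.card = J.card)
    (hH : IsHadamardSub m J K) :
    ((primSet m J' = primSet m J ∧ primSet m K' = primSet m K) → IsHadamardSub m J' K') ∧
    ((primSet m J' = primSet m K ∧ primSet m K' = primSet m J) → IsHadamardSub m J' K') :=
  hadamard_of_primSets_eq_general m hm J J' K K' hJ hJ' hK hK' h2 h3 hH
end

section
/- Let m be a positive integer and let J, K ⊆ {0,1,…,m−1} with |J| = |K| = 2. Then H_{J,K,m} is a Hadamard submatrix of the Fourier matrix F_m if and only if ν₂^min(P_m(J)\{1}) + ν₂^min(P_m(K)\{1}) = ν₂^max(P_m(J)\{1}) + ν₂^max(P_m(K)\{1}) = ν₂(m) + 1, and ν_p^max(P_m(J)\{1}) + ν_p^max(P_m(K)\{1}) ≤ ν_p(m) for all odd primes p. -/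
open Finset

/-!
Write `ζ = e^{2πi/m}`, `J = {a, b}`, `K = {c, d}`, `D = |a - b|` and `E = |c - d|`. The only
Hadamard condition is `ζ^{(a-b)c} + ζ^{(a-b)d} = 0`, i.e. `ζ^{(a-b)(c-d)} = -1`, i.e.
`m ∣ 2DE` but `m ∤ DE`. Prime by prime this says `ν₂(m) = ν₂(D) + ν₂(E) + 1` and
`ν_p(m) ≤ ν_p(D) + ν_p(E)` for odd `p`. On the other side `P_m(J) \ {1} = {m / gcd(m, D)}` is a
singleton (so `ν^min = ν^max`) whose `p`-adic valuation is the truncated difference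
`ν_p(m) - ν_p(D)`, and in these terms the two conditions are the ones of the theorem.
-/

namespace IsPrimitiveRoot

variable {K : Type*} [Field K] {ζ : K} {m : ℕ}

theorem zpow_eq_neg_one_iff (hζ : IsPrimitiveRoot ζ m) (hK : ringChar K ≠ 2) (n : ℤ) :
    ζ ^ n = -1 ↔ (m : ℤ) ∣ 2 * n ∧ ¬ (m : ℤ) ∣ n := by
  rw [← hζ.zpow_eq_one_iff_dvd, ← hζ.zpow_eq_one_iff_dvd, mul_comm, zpow_mul, zpow_two,
    mul_self_eq_one_iff]
  have hne := Ring.neg_one_ne_one_of_char_ne_two hK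
  exact ⟨fun h => ⟨Or.inr h, h ▸ hne⟩, fun ⟨h, h'⟩ => h.resolve_left h'⟩

theorem zpow_add_zpow_eq_zero_iff (hζ : IsPrimitiveRoot ζ m) (hm : m ≠ 0) (hK : ringChar K ≠ 2)
    (a b : ℤ) :
    ζ ^ a + ζ ^ b = 0 ↔ (m : ℤ) ∣ 2 * (a - b) ∧ ¬ (m : ℤ) ∣ (a - b) := by
  have hζ0 : ζ ≠ 0 := hζ.ne_zero hm
  rw [← hζ.zpow_eq_neg_one_iff hK, zpow_sub₀ hζ0, div_eq_iff (zpow_ne_zero _ hζ0), neg_one_mul,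
    add_eq_zero_iff_eq_neg]

end IsPrimitiveRoot

theorem isHadamardSub_pair_iff {m a b c d : ℕ} (hm : m ≠ 0) (hab : a ≠ b) (hcd : c ≠ d) :
    IsHadamardSub m {a, b} {c, d} ↔
      m ∣ 2 * ((a : ℤ) - b).natAbs * ((c : ℤ) - d).natAbs ∧
        ¬ m ∣ ((a : ℤ) - b).natAbs * ((c : ℤ) - d).natAbs := by
  have hζ := Complex.isPrimitiveRoot_exp m hm
  have hC : ringChar ℂ ≠ 2 := by simp
  have row_iff : ∀ j₁ j₂ : ℕ,
      ∑ k ∈ {c, d}, Complex.exp (2 * Real.pi * Complex.I * ((j₁ : ℂ) - j₂) * k / m) = 0 ↔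
        m ∣ 2 * ((j₁ : ℤ) - j₂).natAbs * ((c : ℤ) - d).natAbs ∧
          ¬ m ∣ ((j₁ : ℤ) - j₂).natAbs * ((c : ℤ) - d).natAbs := by
    intro j₁ j₂
    have hexp : ∀ k : ℕ, Complex.exp (2 * Real.pi * Complex.I * ((j₁ : ℂ) - j₂) * k / m) =
        Complex.exp (2 * Real.pi * Complex.I / m) ^ (((j₁ : ℤ) - j₂) * k) := by
      intro k
      rw [← Complex.exp_int_mul]
      push_cast
      ring_nf
    rw [sum_pair hcd, hexp, hexp, hζ.zpow_add_zpow_eq_zero_iff hm hC, ← mul_sub, ← mul_assoc,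
      Int.natCast_dvd, Int.natCast_dvd, Int.natAbs_mul, Int.natAbs_mul, Int.natAbs_mul]
    rfl
  constructor
  · intro h
    exact (row_iff a b).1 (h a (by simp) b (by simp) hab)
  · intro h j₁ hj₁ j₂ hj₂ hne
    simp only [mem_insert, mem_singleton] at hj₁ hj₂
    rcases hj₁ with rfl | rfl <;> rcases hj₂ with rfl | rfl <;> try contradiction
    · exact (row_iff _ _).2 h
    · rwa [row_iff, show ((j₁ : ℤ) - j₂).natAbs = ((j₂ : ℤ) - j₁).natAbs by omega]

theorem Nat.factorization_div_gcd {m n : ℕ} (hm : m ≠ 0) (hn : n ≠ 0) (p : ℕ) :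
    (m / m.gcd n).factorization p = m.factorization p - n.factorization p := by
  rw [Nat.factorization_div (Nat.gcd_dvd_left m n), Finsupp.tsub_apply, Nat.factorization_gcd hm hn,
    Finsupp.inf_apply]
  omega

theorem dvd_two_mul_and_not_dvd_iff_factorization {m D E : ℕ} (hm : m ≠ 0) (hD : D ≠ 0)
    (hE : E ≠ 0) :
    m ∣ 2 * D * E ∧ ¬ m ∣ D * E ↔
      m.factorization 2 = D.factorization 2 + E.factorization 2 + 1 ∧
        ∀ p, p.Prime → p ≠ 2 → m.factorization p ≤ D.factorization p + E.factorization p := by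
  have hDE : D * E ≠ 0 := mul_ne_zero hD hE
  rw [← Nat.factorization_prime_le_iff_dvd hm (by positivity),
    ← Nat.factorization_prime_le_iff_dvd hm hDE, mul_assoc]
  simp only [Nat.factorization_mul two_ne_zero hDE, Nat.factorization_mul hD hE,
    Finsupp.add_apply, Nat.prime_two.factorization, Finsupp.single_apply]
  push Not
  constructor
  · rintro ⟨hle, p, hp, hlt⟩
    have hodd : ∀ q, q.Prime → q ≠ 2 →
        m.factorization q ≤ D.factorization q + E.factorization q := fun q hq hq2 => by
      simpa [Ne.symm hq2] using hle q hq
    obtain rfl : p = 2 := by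
      by_contra hp2
      exact (hodd p hp hp2).not_gt hlt
    have h2 := hle 2 hp
    simp only [if_true] at h2
    exact ⟨by omega, hodd⟩
  · rintro ⟨h2, hodd⟩
    refine ⟨fun p hp => ?_, 2, Nat.prime_two, by omega⟩
    by_cases hp2 : p = 2
    · subst hp2
      simp only [if_true]
      omega
    · simpa [Ne.symm hp2] using hodd p hp hp2

theorem dvd_two_mul_and_not_dvd_iff_padicValNat_div_gcd {m D E : ℕ} (hm : m ≠ 0) (hD : D ≠ 0)
    (hE : E ≠ 0) :
    m ∣ 2 * D * E ∧ ¬ m ∣ D * E ↔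
      padicValNat 2 (m / m.gcd D) + padicValNat 2 (m / m.gcd E) = padicValNat 2 m + 1 ∧
        ∀ p, p.Prime → p ≠ 2 →
          padicValNat p (m / m.gcd D) + padicValNat p (m / m.gcd E) ≤ padicValNat p m := by
  have hval : ∀ p, p.Prime → ∀ n, n ≠ 0 →
      padicValNat p (m / m.gcd n) = m.factorization p - n.factorization p := fun p hp n hn => by
    rw [← Nat.factorization_def _ hp, Nat.factorization_div_gcd hm hn]
  rw [dvd_two_mul_and_not_dvd_iff_factorization hm hD hE]
  refine and_congr ?_ (forall₂_congr fun p hp => imp_congr_right fun _ => ?_)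
  · rw [hval 2 Nat.prime_two D hD, hval 2 Nat.prime_two E hE,
      ← Nat.factorization_def _ Nat.prime_two]
    omega
  · rw [hval p hp D hD, hval p hp E hE, ← Nat.factorization_def _ hp]
    omega

theorem diffSet_pair (a b : ℕ) : diffSet {a, b} = {0, (a : ℤ) - b, (b : ℤ) - a} := by
  ext x
  simp only [diffSet, mem_image, mem_product, mem_insert, mem_singleton, Prod.exists]
  constructor
  · rintro ⟨i, j, ⟨rfl | rfl, rfl | rfl⟩, rfl⟩ <;> simp
  · rintro (rfl | rfl | rfl)
    exacts [⟨a, a, by simp⟩, ⟨a, b, by simp⟩, ⟨b, a, by simp⟩]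

theorem primSet_pair {m : ℕ} (hm : m ≠ 0) (a b : ℕ) :
    primSet m {a, b} = {1, m / m.gcd ((a : ℤ) - b).natAbs} := by
  rw [primSet, diffSet_pair, image_insert, image_insert, image_singleton, Int.natAbs_zero,
    Nat.gcd_zero_right, Nat.div_self (Nat.pos_of_ne_zero hm),
    show ((b : ℤ) - a).natAbs = ((a : ℤ) - b).natAbs by omega,
    insert_eq_of_mem (mem_singleton_self _)]

theorem primSet_pair_erase_one {m a b : ℕ} (ha : a < m) (hb : b < m) (hab : a ≠ b) :
    (primSet m {a, b}).erase 1 = {m / m.gcd ((a : ℤ) - b).natAbs} := by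
  have hm : m ≠ 0 := by omega
  have hD : ((a : ℤ) - b).natAbs ≠ 0 := by omega
  have hDm : ((a : ℤ) - b).natAbs < m := by omega
  have hs : m / m.gcd ((a : ℤ) - b).natAbs ≠ 1 := by
    intro h
    have hg := Nat.div_mul_cancel (Nat.gcd_dvd_left m ((a : ℤ) - b).natAbs)
    rw [h, one_mul] at hg
    have := Nat.gcd_le_right (m := m) (Nat.pos_of_ne_zero hD)
    omega
  rw [primSet_pair hm, erase_insert_eq_erase, erase_eq_of_notMem (notMem_singleton.2 hs.symm)]

theorem nuMaxN_singleton (p s : ℕ) : nuMaxN p {s} = padicValNat p s := by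
  simp [nuMaxN]

theorem nuMinN_singleton (p s : ℕ) : nuMinN p {s} = padicValNat p s := by
  simp [nuMinN]

theorem hadamard_two_by_two_iff_general (m : ℕ) (J K : Finset ℕ)
    (hJ : J ⊆ Finset.range m) (hK : K ⊆ Finset.range m)
    (hJ2 : J.card = 2) (hK2 : K.card = 2) :
    IsHadamardSub m J K ↔
      (nuMinN 2 ((primSet m J).erase 1) + nuMinN 2 ((primSet m K).erase 1)
          = padicValNat 2 m + 1 ∧
       nuMaxN 2 ((primSet m J).erase 1) + nuMaxN 2 ((primSet m K).erase 1)
          = padicValNat 2 m + 1 ∧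
       ∀ p : ℕ, p.Prime → p ≠ 2 →
         nuMaxN p ((primSet m J).erase 1) + nuMaxN p ((primSet m K).erase 1)
           ≤ padicValNat p m) := by
  obtain ⟨a, b, hab, rfl⟩ := card_eq_two.mp hJ2
  obtain ⟨c, d, hcd, rfl⟩ := card_eq_two.mp hK2
  have ha : a < m := mem_range.1 (hJ (mem_insert_self a {b}))
  have hb : b < m := mem_range.1 (hJ (mem_insert_of_mem (mem_singleton_self b)))
  have hc : c < m := mem_range.1 (hK (mem_insert_self c {d}))
  have hd : d < m := mem_range.1 (hK (mem_insert_of_mem (mem_singleton_self d)))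
  rw [isHadamardSub_pair_iff (by omega) hab hcd,
    dvd_two_mul_and_not_dvd_iff_padicValNat_div_gcd (by omega) (by omega) (by omega),
    primSet_pair_erase_one ha hb hab, primSet_pair_erase_one hc hd hcd]
  simp only [nuMinN_singleton, nuMaxN_singleton, and_self_left]

theorem hadamard_two_by_two_iff (m : ℕ) (hm : 0 < m) (J K : Finset ℕ)
    (hJ : J ⊆ Finset.range m) (hK : K ⊆ Finset.range m)
    (hJ2 : J.card = 2) (hK2 : K.card = 2) :
    IsHadamardSub m J K ↔
      (nuMinN 2 ((primSet m J).erase 1) + nuMinN 2 ((primSet m K).erase 1)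
          = padicValNat 2 m + 1 ∧
       nuMaxN 2 ((primSet m J).erase 1) + nuMaxN 2 ((primSet m K).erase 1)
          = padicValNat 2 m + 1 ∧
       ∀ p : ℕ, p.Prime → p ≠ 2 →
         nuMaxN p ((primSet m J).erase 1) + nuMaxN p ((primSet m K).erase 1)
           ≤ padicValNat p m) :=
  hadamard_two_by_two_iff_general m J K hJ hK hJ2 hK2
end
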